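/- arXiv:2209.06306 — 2 statements merged into one kernel-verified Lean document; each statement's English description precedes it below -/
import Mathlib

section
/- Let (Ω, ℱ, P) be a probability space, X a random variable (covariate), A a Bernoulli treatment indicator with propensity π(X) = P(A = 1 | X) satisfying 0 < π(X) almost surely, and let Y*(1) be an integrable random variable (potential outcome) such that A and Y*(1) are conditionally independent given X. Let Y be the observed outcome with Y = Y*(1) on the event {A = 1}. Then E[ 1{A=1} · Y / π(X) ] = E[ Y*(1) ]. -/
open MeasureTheory ProbabilityTheory Filter
open scoped ENNReal NNReal Topology

/-- Single-stage inverse probability weighting identity: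
`E[1{A=1} · Y / π(X)] = E[Y*(1)]` under positivity, conditional independence
(randomization) of `A` and `Y*(1)` given `X`, and consistency. -/
theorem ipw_identity
    {Ω : Type*} [mΩ : MeasurableSpace Ω] [StandardBorelSpace Ω] [Nonempty Ω]
    (μ : Measure Ω) [IsProbabilityMeasure μ]
    (X A Y Ystar : Ω → ℝ) (π : ℝ → ℝ)
    (mX : MeasurableSpace Ω) (hmX : mX ≤ mΩ)
    (hmX_def : mX = MeasurableSpace.comap X inferInstance)
    (hA01 : ∀ ω, A ω = 0 ∨ A ω = 1)
    (hprop : μ[A | mX] =ᵐ[μ] fun ω => π (X ω))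
    (hpos : ∀ᵐ ω ∂μ, 0 < π (X ω))
    (hYint : Integrable Ystar μ)
    (hci : CondIndepFun mX hmX A Ystar μ)
    (hconsist : ∀ ω, A ω = 1 → Y ω = Ystar ω) :
    ∫ ω, (if A ω = 1 then Y ω / π (X ω) else 0) ∂μ = ∫ ω, Ystar ω ∂μ := by
  classical
  letI : MeasurableSpace Ω := mΩ
  have hμ0 : μ ≠ 0 := IsProbabilityMeasure.ne_zero μ
  haveI : (ae μ).NeBot := ae_neBot.mpr hμ0
  -- A is integrable
  have hAint : Integrable A μ := by
    by_contra hA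
    rw [condExp_of_not_integrable hA] at hprop
    obtain ⟨ω, h1, h2⟩ := (hprop.and hpos).exists
    simp only [Pi.zero_apply] at h1
    rw [← h1] at h2
    exact lt_irrefl _ h2
  have hA0 : ∀ ω, 0 ≤ A ω := fun ω => by rcases hA01 ω with h | h <;> rw [h] <;> norm_num
  have hA1 : ∀ ω, A ω ≤ 1 := fun ω => by rcases hA01 ω with h | h <;> rw [h] <;> norm_num
  have hAnorm : ∀ ω, ‖A ω‖ ≤ 1 := fun ω => by
    rw [Real.norm_eq_abs, abs_le]; exact ⟨by linarith [hA0 ω], hA1 ω⟩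
  -- conditional expectation of A
  set E : Ω → ℝ := μ[A | mX] with hE_def
  have hE_sm : StronglyMeasurable[mX] E := stronglyMeasurable_condExp
  have hE_int : Integrable E μ := integrable_condExp
  have hπ_int : Integrable (fun ω => π (X ω)) μ := hE_int.congr hprop
  have hπ_aesm' : AEStronglyMeasurable[mX] (fun ω => π (X ω)) μ :=
    hE_sm.aestronglyMeasurable.congr hprop
  have hπ1 : ∀ᵐ ω ∂μ, π (X ω) ≤ 1 := by
    have h1 : E ≤ᵐ[μ] fun _ => (1 : ℝ) := by
      have := condExp_mono (m := mX) hAint (integrable_const (1 : ℝ))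
        (Eventually.of_forall hA1)
      rwa [condExp_const hmX (1 : ℝ)] at this
    filter_upwards [h1, hprop] with ω h hE
    rw [← hE]; exact h
  -- measurable versions of A and Ystar
  set A' : Ω → ℝ := hAint.1.mk A with hA'_def
  have hA'_ae : A =ᵐ[μ] A' := hAint.1.ae_eq_mk
  have hA'_meas : Measurable[mΩ] A' := hAint.1.stronglyMeasurable_mk.measurable
  set Y' : Ω → ℝ := hYint.1.mk Ystar with hY'_def
  have hY'_ae : Ystar =ᵐ[μ] Y' := hYint.1.ae_eq_mk
  have hY'_meas : Measurable[mΩ] Y' := hYint.1.stronglyMeasurable_mk.measurable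
  set S : Set Ω := A' ⁻¹' {1} with hS_def
  have hS_meas : MeasurableSet[mΩ] S := hA'_meas (measurableSet_singleton 1)
  have hSA : A =ᵐ[μ] S.indicator (fun _ => (1 : ℝ)) := by
    filter_upwards [hA'_ae] with ω hω
    rcases hA01 ω with h | h
    · have : ω ∉ S := by
        simp only [hS_def, Set.mem_preimage, Set.mem_singleton_iff, ← hω, h]
        norm_num
      rw [Set.indicator_of_notMem this, h]
    · have : ω ∈ S := by
        simp only [hS_def, Set.mem_preimage, Set.mem_singleton_iff, ← hω, h]
      rw [Set.indicator_of_mem this, h]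
  -- a measurable null set off which A = A' and Ystar = Y'
  obtain ⟨N₁, hN₁sub, hN₁meas, hN₁0⟩ :=
    exists_measurable_superset_of_null (μ := μ) (ae_iff.mp hA'_ae)
  obtain ⟨N₂, hN₂sub, hN₂meas, hN₂0⟩ :=
    exists_measurable_superset_of_null (μ := μ) (ae_iff.mp hY'_ae)
  set N : Set Ω := N₁ ∪ N₂ with hN_def
  have hN_meas : MeasurableSet[mΩ] N := hN₁meas.union hN₂meas
  have hN0 : μ N = 0 := le_antisymm
    (le_trans (measure_union_le _ _) (by rw [hN₁0, hN₂0]; simp)) zero_le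
  have hNAY : ∀ ω, ω ∉ N → A ω = A' ω ∧ Ystar ω = Y' ω := by
    intro ω hω
    constructor
    · by_contra h; exact hω (Or.inl (hN₁sub h))
    · by_contra h; exact hω (Or.inr (hN₂sub h))
  -- the conditional kernel kills N almost surely (w.r.t. the trimmed measure)
  have hκN : ∀ᵐ ω ∂(μ.trim hmX), condExpKernel μ mX ω N = 0 := by
    have h1 := condExpKernel_ae_eq_trim_condExp (μ := μ) hmX hN_meas
    have hind : N.indicator (fun _ => (1 : ℝ)) =ᵐ[μ] 0 := by
      filter_upwards [measure_eq_zero_iff_ae_notMem.mp hN0] with ω hω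
      simp [Set.indicator_of_notMem hω]
    have h2 : (μ⟦N | mX⟧) =ᵐ[μ] (0 : Ω → ℝ) := by
      refine (condExp_congr_ae hind).trans ?_
      rw [condExp_zero]
    have h2' : (μ⟦N | mX⟧) =ᵐ[μ.trim hmX] (0 : Ω → ℝ) := by
      have hz : StronglyMeasurable[mX] (0 : Ω → ℝ) := stronglyMeasurable_const
      exact (StronglyMeasurable.ae_eq_trim_iff hmX stronglyMeasurable_condExp hz).mpr h2
    filter_upwards [h1, h2'] with ω hω1 hω2
    have h3 : (condExpKernel μ mX ω N).toReal = 0 := by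
      rw [← measureReal_def, hω1, hω2]; rfl
    have h4 := measure_ne_top (condExpKernel μ mX ω) N
    rcases (ENNReal.toReal_eq_zero_iff _).mp h3 with h | h
    · exact h
    · exact absurd h h4
  -- factorization from conditional independence
  have hfact : ∀ b : Set ℝ, MeasurableSet b →
      (μ⟦S ∩ Y' ⁻¹' b | mX⟧) =ᵐ[μ]
        fun ω => (μ⟦S | mX⟧) ω * (μ⟦Y' ⁻¹' b | mX⟧) ω := by
    intro b hb
    have hci' : ProbabilityTheory.Kernel.IndepFun A Ystar (condExpKernel μ mX) (μ.trim hmX) := hci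
    have h := ProbabilityTheory.Kernel.indepFun_iff_measure_inter_preimage_eq_mul.mp hci'
      {1} b (measurableSet_singleton 1) hb
    have hker : ∀ᵐ ω ∂(μ.trim hmX),
        condExpKernel μ mX ω (S ∩ Y' ⁻¹' b)
          = condExpKernel μ mX ω S * condExpKernel μ mX ω (Y' ⁻¹' b) := by
      filter_upwards [h, hκN] with ω hω hωN
      have hae : ∀ᵐ x ∂(condExpKernel μ mX ω), x ∉ N := measure_eq_zero_iff_ae_notMem.mp hωN
      have e1 : condExpKernel μ mX ω (S ∩ Y' ⁻¹' b)
          = condExpKernel μ mX ω (A ⁻¹' {1} ∩ Ystar ⁻¹' b) := by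
        apply measure_congr
        filter_upwards [hae] with x hx
        obtain ⟨hAx, hYx⟩ := hNAY x hx
        show (x ∈ S ∩ Y' ⁻¹' b) = (x ∈ A ⁻¹' {1} ∩ Ystar ⁻¹' b)
        simp only [hS_def, Set.mem_inter_iff, Set.mem_preimage, Set.mem_singleton_iff,
          eq_iff_iff]
        rw [hAx, hYx]
      have e2 : condExpKernel μ mX ω S = condExpKernel μ mX ω (A ⁻¹' {1}) := by
        apply measure_congr
        filter_upwards [hae] with x hx
        obtain ⟨hAx, -⟩ := hNAY x hx
        show (x ∈ S) = (x ∈ A ⁻¹' {1})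
        simp only [hS_def, Set.mem_preimage, Set.mem_singleton_iff, eq_iff_iff]
        rw [hAx]
      have e3 : condExpKernel μ mX ω (Y' ⁻¹' b) = condExpKernel μ mX ω (Ystar ⁻¹' b) := by
        apply measure_congr
        filter_upwards [hae] with x hx
        obtain ⟨-, hYx⟩ := hNAY x hx
        show (x ∈ Y' ⁻¹' b) = (x ∈ Ystar ⁻¹' b)
        simp only [Set.mem_preimage, eq_iff_iff]
        rw [hYx]
      rw [e1, e2, e3, hω]
    have g1 := condExpKernel_ae_eq_trim_condExp (μ := μ) hmX (hS_meas.inter (hY'_meas hb))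
    have g2 := condExpKernel_ae_eq_trim_condExp (μ := μ) hmX hS_meas
    have g3 := condExpKernel_ae_eq_trim_condExp (μ := μ) hmX (hY'_meas hb)
    refine ae_eq_of_ae_eq_trim (hm := hmX) ?_
    filter_upwards [hker, g1, g2, g3] with ω hk h1 h2 h3
    rw [← h1, ← h2, ← h3, measureReal_def, measureReal_def, measureReal_def, hk, ENNReal.toReal_mul]
  have hScond : (μ⟦S | mX⟧) =ᵐ[μ] fun ω => π (X ω) :=
    (condExp_congr_ae hSA.symm).trans hprop
  -- the sup sigma-algebra
  set m₂ : MeasurableSpace Ω := MeasurableSpace.comap Y' inferInstance with hm₂_def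
  have hm₂ : m₂ ≤ mΩ := hY'_meas.comap_le
  set m' : MeasurableSpace Ω := mX ⊔ m₂ with hm'_def
  letI : MeasurableSpace Ω := mΩ
  have hm' : m' ≤ mΩ := sup_le hmX hm₂
  haveI : SigmaFinite (μ.trim hm') := by
    haveI : IsFiniteMeasure (μ.trim hm') := isFiniteMeasure_trim hm'
    infer_instance
  have hY'_m₂ : Measurable[m₂] Y' := Measurable.of_comap_le le_rfl
  have hY'_m' : Measurable[m'] Y' := hY'_m₂.mono le_sup_right le_rfl
  -- set-integral identity on a generating pi-system
  have hsetint : ∀ s : Set Ω, MeasurableSet[m'] s →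
      ∫ x in s, π (X x) ∂μ = ∫ x in s, A x ∂μ := by
    have hgen : m' = MeasurableSpace.generateFrom
        {s : Set Ω | ∃ u, MeasurableSet[mX] u ∧ ∃ b, MeasurableSet b ∧ s = u ∩ Y' ⁻¹' b} := by
      apply le_antisymm
      · rw [hm'_def]
        apply sup_le
        · intro u hu
          exact MeasurableSpace.measurableSet_generateFrom
            ⟨u, hu, Set.univ, MeasurableSet.univ, by simp⟩
        · rintro t ⟨b, hb, rfl⟩
          exact MeasurableSpace.measurableSet_generateFrom
            ⟨Set.univ, MeasurableSet.univ, b, hb, by simp⟩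
      · apply MeasurableSpace.generateFrom_le
        rintro t ⟨u, hu, b, hb, rfl⟩
        exact MeasurableSet.inter ((le_sup_left : mX ≤ m') u hu)
          ((le_sup_right : m₂ ≤ m') _ ⟨b, hb, rfl⟩)
    have hpi : IsPiSystem
        {s : Set Ω | ∃ u, MeasurableSet[mX] u ∧ ∃ b, MeasurableSet b ∧ s = u ∩ Y' ⁻¹' b} := by
      rintro s1 ⟨u1, hu1, b1, hb1, rfl⟩ s2 ⟨u2, hu2, b2, hb2, rfl⟩ -
      exact ⟨u1 ∩ u2, hu1.inter hu2, b1 ∩ b2, hb1.inter hb2, by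
        rw [Set.preimage_inter]; exact Set.inter_inter_inter_comm _ _ _ _⟩
    have htot : ∫ x, π (X x) ∂μ = ∫ x, A x ∂μ := by
      rw [integral_congr_ae hprop.symm]
      exact integral_condExp hmX
    intro s hs
    refine @MeasurableSpace.induction_on_inter Ω m'
      (fun s _ => ∫ x in s, π (X x) ∂μ = ∫ x in s, A x ∂μ) _ hgen hpi ?_ ?_ ?_ ?_ s hs
    · simp
    · rintro t ⟨u, hu, b, hb, rfl⟩
      have ht'm : MeasurableSet[mΩ] (Y' ⁻¹' b) := hY'_meas hb
      have hum : MeasurableSet[mΩ] u := hmX u hu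
      have hind_int : Integrable ((Y' ⁻¹' b ∩ S).indicator fun _ => (1 : ℝ)) μ :=
        (integrable_const 1).indicator (ht'm.inter hS_meas)
      have hindb_int : Integrable ((Y' ⁻¹' b).indicator fun _ => (1 : ℝ)) μ :=
        (integrable_const 1).indicator ht'm
      have hmulint : Integrable (fun x => π (X x) * (Y' ⁻¹' b).indicator (fun _ => (1:ℝ)) x) μ := by
        refine Integrable.bdd_mul (c := 1) hindb_int hπ_int.1 ?_
        filter_upwards [hpos, hπ1] with ω h0 h1
        rw [Real.norm_eq_abs, abs_of_nonneg h0.le]; exact h1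
      -- right side
      have r5 : (μ⟦Y' ⁻¹' b ∩ S | mX⟧) =ᵐ[μ]
          fun ω => π (X ω) * (μ⟦Y' ⁻¹' b | mX⟧) ω := by
        rw [Set.inter_comm]
        refine (hfact b hb).trans ?_
        filter_upwards [hScond] with ω h
        rw [h]
      have rhs : ∫ x in u ∩ Y' ⁻¹' b, A x ∂μ
          = ∫ x in u, π (X x) * (μ⟦Y' ⁻¹' b | mX⟧) x ∂μ := by
        calc ∫ x in u ∩ Y' ⁻¹' b, A x ∂μ
            = ∫ x in u ∩ Y' ⁻¹' b, S.indicator (fun _ => (1:ℝ)) x ∂μ :=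
              setIntegral_congr_ae (hum.inter ht'm) (by
                filter_upwards [hSA] with x hx _; exact hx)
          _ = (μ ((u ∩ Y' ⁻¹' b) ∩ S)).toReal := by
              rw [setIntegral_indicator hS_meas, setIntegral_const, smul_eq_mul, mul_one, measureReal_def]
          _ = (μ (u ∩ (Y' ⁻¹' b ∩ S))).toReal := by rw [Set.inter_assoc]
          _ = ∫ x in u, ((Y' ⁻¹' b ∩ S).indicator fun _ => (1:ℝ)) x ∂μ := by
              rw [setIntegral_indicator (ht'm.inter hS_meas), setIntegral_const,
                smul_eq_mul, mul_one, measureReal_def]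
          _ = ∫ x in u, (μ⟦Y' ⁻¹' b ∩ S | mX⟧) x ∂μ :=
              (setIntegral_condExp hmX hind_int hu).symm
          _ = ∫ x in u, π (X x) * (μ⟦Y' ⁻¹' b | mX⟧) x ∂μ :=
              setIntegral_congr_ae hum (by
                filter_upwards [r5] with x hx _; exact hx)
      have l4 : (μ[fun x => π (X x) * (Y' ⁻¹' b).indicator (fun _ => (1:ℝ)) x | mX]) =ᵐ[μ]
          fun x => π (X x) * (μ⟦Y' ⁻¹' b | mX⟧) x :=
        condExp_mul_of_aestronglyMeasurable_left hπ_aesm' hmulint hindb_int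
      have lhs : ∫ x in u ∩ Y' ⁻¹' b, π (X x) ∂μ
          = ∫ x in u, π (X x) * (μ⟦Y' ⁻¹' b | mX⟧) x ∂μ := by
        calc ∫ x in u ∩ Y' ⁻¹' b, π (X x) ∂μ
            = ∫ x in u, (Y' ⁻¹' b).indicator (fun x => π (X x)) x ∂μ :=
              (setIntegral_indicator ht'm).symm
          _ = ∫ x in u, π (X x) * (Y' ⁻¹' b).indicator (fun _ => (1:ℝ)) x ∂μ := by
              refine setIntegral_congr_ae hum (Eventually.of_forall fun x _ => ?_)
              by_cases hx : x ∈ Y' ⁻¹' b <;> simp [hx]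
          _ = ∫ x in u, (μ[fun x => π (X x) * (Y' ⁻¹' b).indicator (fun _ => (1:ℝ)) x | mX]) x ∂μ :=
              (setIntegral_condExp hmX hmulint hu).symm
          _ = ∫ x in u, π (X x) * (μ⟦Y' ⁻¹' b | mX⟧) x ∂μ :=
              setIntegral_congr_ae hum (by
                filter_upwards [l4] with x hx _; exact hx)
      rw [lhs, rhs]
    · intro t htm' ht
      have htm : MeasurableSet[mΩ] t := hm' t htm'
      have h1 := integral_add_compl htm hπ_int
      have h2 := integral_add_compl htm hAint
      rw [htot] at h1
      rw [← h2] at h1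
      linarith
    · intro f hdisj hmeas hC
      rw [integral_iUnion (fun i => hm' _ (hmeas i)) hdisj hπ_int.integrableOn,
        integral_iUnion (fun i => hm' _ (hmeas i)) hdisj hAint.integrableOn]
      exact tsum_congr hC
  -- conditional expectation of A given m'
  have hAm' : μ[A | m'] =ᵐ[μ] fun ω => π (X ω) :=
    (ae_eq_condExp_of_forall_setIntegral_eq hm' hAint
      (fun s _ _ => hπ_int.integrableOn)
      (fun s hs _ => hsetint s hs)
      (hπ_aesm'.mono le_sup_left)).symm
  -- key identity
  have key : ∀ g : Ω → ℝ, AEStronglyMeasurable[m'] g μ → Integrable g μ →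
      ∫ ω, g ω * A ω ∂μ = ∫ ω, g ω * π (X ω) ∂μ := by
    intro g hgm hgi
    have hga : Integrable (fun ω => g ω * A ω) μ := by
      refine Integrable.mono' hgi.abs (hgi.1.mul hAint.1) ?_
      filter_upwards with ω
      calc ‖g ω * A ω‖ = ‖g ω‖ * ‖A ω‖ := norm_mul _ _
        _ ≤ ‖g ω‖ * 1 := mul_le_mul_of_nonneg_left (hAnorm ω) (norm_nonneg _)
        _ = |g ω| := by rw [mul_one, Real.norm_eq_abs]
    have h1 : (μ[fun ω => g ω * A ω | m']) =ᵐ[μ] fun ω => g ω * (μ[A | m']) ω :=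
      condExp_mul_of_aestronglyMeasurable_left hgm hga hAint
    calc ∫ ω, g ω * A ω ∂μ = ∫ ω, (μ[fun ω => g ω * A ω | m']) ω ∂μ :=
        (integral_condExp hm').symm
      _ = ∫ ω, g ω * π (X ω) ∂μ := integral_congr_ae (h1.trans (by
          filter_upwards [hAm'] with ω h; rw [h]))
  -- truncated weights
  set B : ℕ → Ω → ℝ := fun n ω => max 0 (min (E ω)⁻¹ (n : ℝ)) with hB_def
  have hB_m' : ∀ n, StronglyMeasurable[m'] (B n) := by
    intro n
    have h : Measurable[mX] (B n) := by
      have hEm : Measurable[mX] E := hE_sm.measurable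
      exact measurable_const.max (hEm.inv.min measurable_const)
    exact (h.mono (le_sup_left : mX ≤ m') le_rfl).stronglyMeasurable
  have hB_aesm : ∀ n, AEStronglyMeasurable (B n) μ := fun n =>
    ((hB_m' n).mono hm').aestronglyMeasurable
  have hB_nonneg : ∀ n ω, 0 ≤ B n ω := fun n ω => le_max_left _ _
  have hB_le_n : ∀ (n : ℕ) ω, B n ω ≤ n := fun n ω =>
    max_le (Nat.cast_nonneg n) (min_le_right _ _)
  have hB_mono : ∀ ω, Monotone fun n => B n ω := fun ω a b hab =>
    max_le_max le_rfl (min_le_min le_rfl (Nat.cast_le.mpr hab))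
  have hBprops : ∀ᵐ ω ∂μ, ∀ n : ℕ,
      B n ω = min (π (X ω))⁻¹ n ∧ B n ω * π (X ω) ≤ 1 ∧ B n ω ≤ (π (X ω))⁻¹ := by
    filter_upwards [hprop, hpos] with ω hE hp
    intro n
    have hβ : 0 < (π (X ω))⁻¹ := inv_pos.mpr hp
    have h1 : B n ω = min (π (X ω))⁻¹ n := by
      simp only [hB_def]
      rw [hE]
      exact max_eq_right (le_min hβ.le (Nat.cast_nonneg n))
    refine ⟨h1, ?_, ?_⟩
    · rw [h1]
      calc min (π (X ω))⁻¹ n * π (X ω) ≤ (π (X ω))⁻¹ * π (X ω) :=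
          mul_le_mul_of_nonneg_right (min_le_left _ _) hp.le
        _ = 1 := inv_mul_cancel₀ hp.ne'
    · rw [h1]; exact min_le_left _ _
  have hYabs := hYint.abs
  have hB_norm : ∀ (n : ℕ) ω, ‖B n ω‖ ≤ (n : ℝ) := fun n ω => by
    rw [Real.norm_eq_abs, abs_of_nonneg (hB_nonneg n ω)]; exact hB_le_n n ω
  have hg1_int : ∀ n, Integrable (fun ω => B n ω * Ystar ω) μ := fun n =>
    Integrable.bdd_mul (c := n) hYint (hB_aesm n)
      (Eventually.of_forall (hB_norm n))
  have hg2_int : ∀ n, Integrable (fun ω => B n ω * |Ystar ω|) μ := fun n =>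
    Integrable.bdd_mul (c := n) hYabs (hB_aesm n)
      (Eventually.of_forall (hB_norm n))
  have hY'sm : StronglyMeasurable[m'] Y' := hY'_m'.stronglyMeasurable
  have hg1_aesm' : ∀ n, AEStronglyMeasurable[m'] (fun ω => B n ω * Ystar ω) μ := fun n =>
    ⟨fun ω => B n ω * Y' ω, (hB_m' n).mul hY'sm,
      by filter_upwards [hY'_ae] with ω h; rw [h]⟩
  have hg2_aesm' : ∀ n, AEStronglyMeasurable[m'] (fun ω => B n ω * |Ystar ω|) μ := fun n =>
    ⟨fun ω => B n ω * |Y' ω|, by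
      have hb : Measurable[m'] (B n) := (hB_m' n).measurable
      have hy : Measurable[m'] fun ω => |Y' ω| := measurable_abs.comp hY'_m'
      have h2 : Measurable[m'] fun ω => B n ω * |Y' ω| := hb.mul hy
      exact h2.stronglyMeasurable,
      by filter_upwards [hY'_ae] with ω h; rw [h]⟩
  have eq1 : ∀ n, ∫ ω, B n ω * Ystar ω * A ω ∂μ = ∫ ω, B n ω * Ystar ω * π (X ω) ∂μ :=
    fun n => key _ (hg1_aesm' n) (hg1_int n)
  have eq2 : ∀ n, ∫ ω, B n ω * |Ystar ω| * A ω ∂μ = ∫ ω, B n ω * |Ystar ω| * π (X ω) ∂μ :=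
    fun n => key _ (hg2_aesm' n) (hg2_int n)
  have bound2 : ∀ n, ∫ ω, B n ω * |Ystar ω| * π (X ω) ∂μ ≤ ∫ ω, |Ystar ω| ∂μ := by
    intro n
    have habs : ∀ᵐ ω ∂μ, |B n ω * |Ystar ω| * π (X ω)| ≤ |Ystar ω| ∧
        B n ω * |Ystar ω| * π (X ω) ≤ |Ystar ω| := by
      filter_upwards [hBprops, hpos] with ω h hp
      obtain ⟨-, h2, -⟩ := h n
      have hkey : B n ω * |Ystar ω| * π (X ω) ≤ |Ystar ω| := by
        calc B n ω * |Ystar ω| * π (X ω) = B n ω * π (X ω) * |Ystar ω| := by ring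
          _ ≤ 1 * |Ystar ω| := mul_le_mul_of_nonneg_right h2 (abs_nonneg _)
          _ = |Ystar ω| := one_mul _
      have hnn : 0 ≤ B n ω * |Ystar ω| * π (X ω) :=
        mul_nonneg (mul_nonneg (hB_nonneg n ω) (abs_nonneg _)) hp.le
      exact ⟨by rwa [abs_of_nonneg hnn], hkey⟩
    refine integral_mono_ae ?_ hYabs (habs.mono fun ω h => h.2)
    refine Integrable.mono' hYabs (((hB_aesm n).mul hYabs.1).mul hπ_int.1) ?_
    filter_upwards [habs] with ω h
    rw [Real.norm_eq_abs]
    exact h.1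
  -- rewrite the integrand
  have hH : (fun ω => if A ω = 1 then Y ω / π (X ω) else 0)
      = fun ω => A ω * Ystar ω * (π (X ω))⁻¹ := by
    funext ω
    rcases hA01 ω with h | h
    · rw [h]; norm_num
    · rw [h, if_pos rfl, hconsist ω h, one_mul, div_eq_mul_inv]
  -- integrability of the weighted outcome
  have hint : Integrable (fun ω => A ω * Ystar ω * (π (X ω))⁻¹) μ := by
    refine ⟨(hAint.1.mul hYint.1).mul (hπ_int.1.aemeasurable.inv.aestronglyMeasurable), ?_⟩
    have hu_meas : ∀ n : ℕ, AEMeasurable (fun ω => ENNReal.ofReal (B n ω * |Ystar ω| * A ω)) μ :=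
      fun n => ENNReal.measurable_ofReal.comp_aemeasurable
        (((hB_aesm n).aemeasurable.mul hYabs.1.aemeasurable).mul hAint.1.aemeasurable)
    have hu_mono : ∀ᵐ ω ∂μ, Monotone fun n => ENNReal.ofReal (B n ω * |Ystar ω| * A ω) :=
      Eventually.of_forall fun ω a b hab => ENNReal.ofReal_le_ofReal
        (mul_le_mul_of_nonneg_right
          (mul_le_mul_of_nonneg_right (hB_mono ω hab) (abs_nonneg _)) (hA0 ω))
    have hsup : ∀ᵐ ω ∂μ, (⨆ n, ENNReal.ofReal (B n ω * |Ystar ω| * A ω))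
        = (‖A ω * Ystar ω * (π (X ω))⁻¹‖₊ : ℝ≥0∞) := by
      filter_upwards [hBprops, hpos] with ω hB hp
      have hβ0 : (0:ℝ) ≤ (π (X ω))⁻¹ := (inv_pos.mpr hp).le
      have htarget : (‖A ω * Ystar ω * (π (X ω))⁻¹‖₊ : ℝ≥0∞)
          = ENNReal.ofReal ((π (X ω))⁻¹ * |Ystar ω| * A ω) := by
        rw [← enorm_eq_nnnorm, ← ofReal_norm]
        congr 1
        rw [Real.norm_eq_abs, abs_mul, abs_mul, abs_of_nonneg (hA0 ω), abs_of_nonneg hβ0]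
        ring
      rw [htarget]
      apply le_antisymm
      · refine iSup_le fun n => ENNReal.ofReal_le_ofReal ?_
        obtain ⟨-, -, h3⟩ := hB n
        exact mul_le_mul_of_nonneg_right
          (mul_le_mul_of_nonneg_right h3 (abs_nonneg _)) (hA0 ω)
      · refine le_trans (le_of_eq ?_) (le_iSup _ ⌈(π (X ω))⁻¹⌉₊)
        obtain ⟨h1, -, -⟩ := hB ⌈(π (X ω))⁻¹⌉₊
        rw [h1, min_eq_left (Nat.le_ceil _)]
    show HasFiniteIntegral (fun ω => A ω * Ystar ω * (π (X ω))⁻¹) μ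
    rw [HasFiniteIntegral]
    calc ∫⁻ ω, (‖A ω * Ystar ω * (π (X ω))⁻¹‖₊ : ℝ≥0∞) ∂μ
        = ∫⁻ ω, ⨆ n, ENNReal.ofReal (B n ω * |Ystar ω| * A ω) ∂μ :=
          lintegral_congr_ae (hsup.mono fun ω h => h.symm)
      _ = ⨆ n, ∫⁻ ω, ENNReal.ofReal (B n ω * |Ystar ω| * A ω) ∂μ :=
          lintegral_iSup' hu_meas hu_mono
      _ ≤ ENNReal.ofReal (∫ ω, |Ystar ω| ∂μ) := by
          refine iSup_le fun n => ?_
          have hcn : Integrable (fun ω => B n ω * |Ystar ω| * A ω) μ := by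
            refine Integrable.mono' (hg2_int n).norm ((hg2_int n).1.mul hAint.1) ?_
            filter_upwards with ω
            calc ‖B n ω * |Ystar ω| * A ω‖ = ‖B n ω * |Ystar ω|‖ * ‖A ω‖ := norm_mul _ _
              _ ≤ ‖B n ω * |Ystar ω|‖ * 1 := mul_le_mul_of_nonneg_left (hAnorm ω) (norm_nonneg _)
              _ = ‖B n ω * |Ystar ω|‖ := mul_one _
          have hnn : 0 ≤ᵐ[μ] fun ω => B n ω * |Ystar ω| * A ω := Eventually.of_forall fun ω =>
            mul_nonneg (mul_nonneg (hB_nonneg n ω) (abs_nonneg _)) (hA0 ω)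
          rw [← ofReal_integral_eq_lintegral_ofReal hcn hnn]
          exact ENNReal.ofReal_le_ofReal (le_trans (le_of_eq (eq2 n)) (bound2 n))
      _ < ⊤ := ENNReal.ofReal_lt_top
  -- limits
  have hb1 : ∀ᵐ ω ∂μ, ∀ n : ℕ, ‖B n ω * Ystar ω * A ω‖ ≤ |A ω * Ystar ω * (π (X ω))⁻¹| := by
    filter_upwards [hBprops, hpos] with ω h hp
    intro n
    obtain ⟨-, -, h3⟩ := h n
    have hβ0 : (0:ℝ) ≤ (π (X ω))⁻¹ := (inv_pos.mpr hp).le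
    have e1 : ‖B n ω * Ystar ω * A ω‖ = B n ω * |Ystar ω| * A ω := by
      rw [Real.norm_eq_abs, abs_mul, abs_mul, abs_of_nonneg (hB_nonneg n ω),
        abs_of_nonneg (hA0 ω)]
    have e2 : |A ω * Ystar ω * (π (X ω))⁻¹| = (π (X ω))⁻¹ * |Ystar ω| * A ω := by
      rw [abs_mul, abs_mul, abs_of_nonneg (hA0 ω), abs_of_nonneg hβ0]
      ring
    rw [e1, e2]
    exact mul_le_mul_of_nonneg_right (mul_le_mul_of_nonneg_right h3 (abs_nonneg _)) (hA0 ω)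
  have hconv1 : ∀ᵐ ω ∂μ, Tendsto (fun n => B n ω * Ystar ω * A ω) atTop
      (𝓝 (A ω * Ystar ω * (π (X ω))⁻¹)) := by
    filter_upwards [hBprops] with ω h
    refine tendsto_atTop_of_eventually_const (i₀ := ⌈(π (X ω))⁻¹⌉₊) fun n hn => ?_
    obtain ⟨h1, -, -⟩ := h n
    rw [h1, min_eq_left (le_trans (Nat.le_ceil _) (Nat.cast_le.mpr hn))]
    ring
  have t1 : Tendsto (fun n => ∫ ω, B n ω * Ystar ω * A ω ∂μ) atTop
      (𝓝 (∫ ω, A ω * Ystar ω * (π (X ω))⁻¹ ∂μ)) := by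
    refine tendsto_integral_of_dominated_convergence
      (fun ω => |A ω * Ystar ω * (π (X ω))⁻¹|)
      (fun n => (hg1_int n).1.mul hAint.1) hint.abs
      (fun n => hb1.mono fun ω h => h n) hconv1
  have hconv2 : ∀ᵐ ω ∂μ, Tendsto (fun n => B n ω * Ystar ω * π (X ω)) atTop
      (𝓝 (Ystar ω)) := by
    filter_upwards [hBprops, hpos] with ω h hp
    refine tendsto_atTop_of_eventually_const (i₀ := ⌈(π (X ω))⁻¹⌉₊) fun n hn => ?_
    obtain ⟨h1, -, -⟩ := h n
    rw [h1, min_eq_left (le_trans (Nat.le_ceil _) (Nat.cast_le.mpr hn))]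
    rw [mul_comm, ← mul_assoc, mul_inv_cancel₀ hp.ne', one_mul]
  have hb2 : ∀ᵐ ω ∂μ, ∀ n : ℕ, ‖B n ω * Ystar ω * π (X ω)‖ ≤ |Ystar ω| := by
    filter_upwards [hBprops, hpos] with ω h hp
    intro n
    obtain ⟨-, h2, -⟩ := h n
    have e1 : ‖B n ω * Ystar ω * π (X ω)‖ = B n ω * π (X ω) * |Ystar ω| := by
      rw [Real.norm_eq_abs, abs_mul, abs_mul, abs_of_nonneg (hB_nonneg n ω),
        abs_of_nonneg hp.le]
      ring
    rw [e1]
    calc B n ω * π (X ω) * |Ystar ω| ≤ 1 * |Ystar ω| :=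
        mul_le_mul_of_nonneg_right h2 (abs_nonneg _)
      _ = |Ystar ω| := one_mul _
  have t2 : Tendsto (fun n => ∫ ω, B n ω * Ystar ω * π (X ω) ∂μ) atTop
      (𝓝 (∫ ω, Ystar ω ∂μ)) := by
    refine tendsto_integral_of_dominated_convergence (fun ω => |Ystar ω|)
      (fun n => (hg1_int n).1.mul hπ_int.1) hYint.abs
      (fun n => hb2.mono fun ω h => h n) hconv2
  have heq : (fun n => ∫ ω, B n ω * Ystar ω * A ω ∂μ)
      = fun n => ∫ ω, B n ω * Ystar ω * π (X ω) ∂μ := funext eq1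
  rw [heq] at t1
  rw [hH]
  exact tendsto_nhds_unique t1 t2
end

section
/- Fix a regime d with binary treatments at each stage. Let Cₖ = ∏_{v=1}^{k} 1{A_v = d_v(H_v)} denote consistency through stage k, κ(t) the furthest stage reached, πₖ = πₖ(A_k, H_k) ∈ (0,1] the stage-k propensity, and νₖ(t), ν_{k+1}(t) ∈ (0,1] with ν_{k+1}(t) ≤ νₖ(t). For an odd coarsening level r = 2k − 1 and the even level r + 1 = 2k, define Cᵣ(t) = [1{R(t) = r} − (1 − πₖ)·1{R(t) ≥ r}] / (νₖ(t) ∏_{v=1}^{k} π_v) and C_{r+1}(t) = [1{R(t) = r+1} − ((νₖ(t) − ν_{k+1}(t))/νₖ(t))·1{R(t) ≥ r+1}] / (ν_{k+1}(t) ∏_{v=1}^{k} π_v), where R(t) is the coarsening variable determined by the consistency indicators, κ(t), and the completion indicator Δ(t). Then the following pointwise algebraic identity holds: Cᵣ(t) + C_{r+1}(t) = [1{κ(t) ≥ k} · ∏_{v=1}^{k−1} 1{A_v = d_v(H_v)}] / (νₖ(t) ∏_{v=1}^{k−1} π_v) · ( 1 + νₖ(t)·1{A_k = d_k(H_k)}·(1{κ(t)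 = k}(1 − Δ(t)) − 1) / (ν_{k+1}(t)·πₖ) ). -/
/-- Pointwise algebraic collapse of the pair of consecutive odd/even augmentation
weight terms of the interim AIPW estimator into a single product form. Here `c v` is
the indicator `1{A_v = d_v(H_v)}`, `κ` is the furthest stage reached, `Δ` the
completion indicator, `π v` the stage-`v` propensities, and `ν, ν'` the progression
probabilities `ν_k(t), ν_{k+1}(t)`. -/
theorem iaipw_weight_collapse
    (k : ℕ) (hk : 1 ≤ k)
    (c : ℕ → ℝ) (hc : ∀ v, c v = 0 ∨ c v = 1)
    (κ : ℕ) (Δ : ℝ) (hΔ : Δ = 0 ∨ Δ = 1)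
    (π : ℕ → ℝ) (hπ : ∀ v, 0 < π v ∧ π v ≤ 1)
    (ν ν' : ℝ) (hν : 0 < ν ∧ ν ≤ 1) (hν' : 0 < ν' ∧ ν' ≤ 1) (hνν' : ν' ≤ ν) :
    ((∏ v ∈ Finset.Icc 1 (k-1), c v) * (1 - c k) * (if k ≤ κ then (1:ℝ) else 0)
       - (1 - π k) * ((∏ v ∈ Finset.Icc 1 (k-1), c v) * (if k ≤ κ then (1:ℝ) else 0)))
      / (ν * ∏ v ∈ Finset.Icc 1 k, π v)
    + ((∏ v ∈ Finset.Icc 1 k, c v) * (if κ = k then (1:ℝ) else 0) * (1 - Δ)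
       - ((ν - ν') / ν) * ((∏ v ∈ Finset.Icc 1 k, c v) * (if k ≤ κ then (1:ℝ) else 0)))
      / (ν' * ∏ v ∈ Finset.Icc 1 k, π v)
    = ((if k ≤ κ then (1:ℝ) else 0) * ∏ v ∈ Finset.Icc 1 (k-1), c v)
        / (ν * ∏ v ∈ Finset.Icc 1 (k-1), π v)
      * (1 + ν * c k * ((if κ = k then (1:ℝ) else 0) * (1 - Δ) - 1) / (ν' * π k)) := by
  obtain ⟨m, rfl⟩ : ∃ m, k = m + 1 := ⟨k - 1, (Nat.succ_pred_eq_of_pos hk).symm⟩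
  have hQ : (0:ℝ) < ∏ v ∈ Finset.Icc 1 m, π v :=
    Finset.prod_pos fun v _ => (hπ v).1
  have hJ : (if κ = m + 1 then (1:ℝ) else 0)
      = (if m + 1 ≤ κ then (1:ℝ) else 0) * (if κ = m + 1 then 1 else 0) := by
    split_ifs with h1 h2 h2 <;> simp_all <;> omega
  rw [Finset.prod_Icc_succ_top (Nat.le_add_left 1 m) π,
      Finset.prod_Icc_succ_top (Nat.le_add_left 1 m) c,
      Nat.add_sub_cancel]
  have hπk : π (m + 1) ≠ 0 := ne_of_gt (hπ (m + 1)).1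
  have hν0 : ν ≠ 0 := ne_of_gt hν.1
  have hν'0 : ν' ≠ 0 := ne_of_gt hν'.1
  have hQ0 : (∏ v ∈ Finset.Icc 1 m, π v) ≠ 0 := ne_of_gt hQ
  by_cases h1 : m + 1 ≤ κ <;> by_cases h2 : κ = m + 1 <;>
    simp only [h1, h2, le_refl, if_true, if_false, if_pos, if_neg] <;>
    first
      | (exfalso; omega)
      | (field_simp; try ring)
end
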